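/- (Iemoto–Takahashi) Let H be a real Hilbert space, {T_n} a sequence of nonexpansive self-mappings of H with a common fixed point, F the set of common fixed points of {T_n}, and A : H → H a κ-strongly monotone and η-lipschitzian mapping with κ, η > 0 and η² < 2κ. Let {λ_n} be a sequence in [0,1] with λ_n → 0 and ∑_{n=1}^∞ λ_n = ∞, and let {γ_n} be a sequence in [a, b] with 0 < a ≤ b < 1. For each n ∈ ℕ and k ∈ {1, 2, …, n+1}, define the mapping U_{n,k} : H → H by U_{n,n+1} = I and U_{n,k} = γ_k T_k U_{n,k+1} + (1 − γ_k) I. Let y ∈ H and define {y_n} by y_1 = y and y_{n+1} = (I − λ_n A) U_{n,1} y_n for n ∈ ℕ. Then {y_n} converges strongly to the unique point z ∈ F satisfying ⟨w − z, Az⟩ ≥ 0 for all w ∈ F. -/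

import Mathlib

/-!
Write `W n = U n 0`. For a common fixed point `p`, consecutive `W n` differ by at most
`2 b ^ (n + 2) ‖x - p‖`, so they converge uniformly on bounded sets to a nonexpansive map `V`, and
strict convexity shows that every fixed point of `V` is a common fixed point of the `T k`.
Since `η² < 2κ`, `I - λA` contracts distances by the factor `1 - λτ/2` with
`τ = min (2κ - η²) 1`; hence `P_F ∘ (I - A)` is a contraction whose fixed point `z` solves the
variational inequality, which has at most one solution by strong monotonicity.

For `s n = ‖y n - z‖²` one gets
`s (n+1) ≤ (1 - λ_n τ) s n + 2 λ_n ⟪-A z, y (n+1) - z⟫` and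
`s (n+1) ≤ s n - c ‖W n (y n) - y n‖² + λ_n C`.
Along a subsequence on which `‖W n (y n) - y n‖ → 0`, also `y n - V (y n) → 0`, so by
demiclosedness (weak limits along ultrafilters) the weak cluster points of `y` lie in `F` and
`⟪-A z, y (n+1) - z⟫` is eventually below any `δ > 0`. Maingé's argument concludes: if `s` is
eventually nonincreasing, the second inequality gives asymptotic regularity and the first is Xu's
recursion; otherwise one passes to the last increase `σ n = max {k ≤ n | s k < s (k+1)}`, where
`s n ≤ s (σ n + 1)` and the first inequality forces `s (σ n)` to be small.
-/

open RealInnerProductSpace Filter Topology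

lemma le_max_of_le_convexComb {t a : ℕ → ℝ} {M : ℝ} (ha0 : ∀ n, 0 ≤ a n) (ha1 : ∀ n, a n ≤ 1)
    (hrec : ∀ n, t (n + 1) ≤ (1 - a n) * t n + a n * M) (n : ℕ) : t n ≤ max (t 0) M := by
  induction n with
  | zero => exact le_max_left _ _
  | succ n ih =>
    calc t (n + 1) ≤ (1 - a n) * t n + a n * M := hrec n
      _ ≤ (1 - a n) * max (t 0) M + a n * max (t 0) M := by
        gcongr
        · linarith [ha1 n]
        · exact ha0 n
        · exact le_max_right _ _
      _ = max (t 0) M := by ring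

lemma tendsto_prod_Ico_one_sub_zero {a : ℕ → ℝ} (ha1 : ∀ n, a n ≤ 1)
    (hdiv : Tendsto (fun n => ∑ k ∈ Finset.range n, a k) atTop atTop) (N : ℕ) :
    Tendsto (fun n => ∏ k ∈ Finset.Ico N n, (1 - a k)) atTop (𝓝 0) := by
  have hexp : ∀ n, N ≤ n → ∏ k ∈ Finset.Ico N n, (1 - a k)
      ≤ Real.exp (-(∑ k ∈ Finset.range n, a k - ∑ k ∈ Finset.range N, a k)) := by
    intro n hn
    rw [← Finset.sum_Ico_eq_sub _ hn, ← Finset.sum_neg_distrib, Real.exp_sum]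
    exact Finset.prod_le_prod (fun k _ => sub_nonneg.2 (ha1 k))
      fun k _ => by linarith [Real.add_one_le_exp (-a k)]
  have hlim : Tendsto (fun n => Real.exp (-(∑ k ∈ Finset.range n, a k
      - ∑ k ∈ Finset.range N, a k))) atTop (𝓝 0) :=
    Real.tendsto_exp_atBot.comp (tendsto_neg_atTop_atBot.comp
      (tendsto_atTop_add_const_right _ _ hdiv))
  refine squeeze_zero' (Eventually.of_forall fun n =>
    Finset.prod_nonneg fun k _ => sub_nonneg.2 (ha1 k)) ?_ hlim
  filter_upwards [eventually_ge_atTop N] with n hn using hexp n hn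

lemma eventually_lt_of_le_convexComb {s a : ℕ → ℝ} {c : ℝ}
    (ha1 : ∀ n, a n ≤ 1) (hdiv : Tendsto (fun n => ∑ k ∈ Finset.range n, a k) atTop atTop)
    (hrec : ∀ᶠ n in atTop, s (n + 1) ≤ (1 - a n) * s n + a n * c) {ε : ℝ} (hε : 0 < ε) :
    ∀ᶠ n in atTop, s n < c + ε := by
  obtain ⟨N, hN⟩ := eventually_atTop.1 hrec
  set M := max (s N - c) 0
  have hbound : ∀ n, N ≤ n → s n - c ≤ M * ∏ k ∈ Finset.Ico N n, (1 - a k) := by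
    intro n hn
    induction n, hn using Nat.le_induction with
    | base => simp [M]
    | succ n hn ih =>
      rw [Finset.prod_Ico_succ_top hn, ← mul_assoc]
      have := hN n hn
      nlinarith [sub_nonneg.2 (ha1 n)]
  have hsmall : ∀ᶠ n in atTop, M * ∏ k ∈ Finset.Ico N n, (1 - a k) < ε := by
    have := (tendsto_prod_Ico_one_sub_zero ha1 hdiv N).const_mul M
    rw [mul_zero] at this
    exact this.eventually (gt_mem_nhds hε)
  filter_upwards [hsmall, eventually_ge_atTop N] with n hn hNn
  linarith [hbound n hNn]

lemma exists_mainge_subseq {s : ℕ → ℝ} (h : ∃ᶠ k in atTop, s k < s (k + 1)) :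
    ∃ σ : ℕ → ℕ, Tendsto σ atTop atTop ∧
      ∀ᶠ n in atTop, s (σ n) < s (σ n + 1) ∧ s n ≤ s (σ n + 1) := by
  classical
  let P k := s k < s (k + 1)
  obtain ⟨k₀, hk₀⟩ := h.exists
  refine ⟨Nat.findGreatest P, ?_, ?_⟩
  · refine tendsto_atTop_atTop.2 fun m => ?_
    obtain ⟨k, hmk, hk⟩ := (frequently_atTop.1 h) m
    exact ⟨k, fun n hn => hmk.trans (Nat.le_findGreatest hn hk)⟩
  · filter_upwards [eventually_ge_atTop k₀] with n hn
    refine ⟨Nat.findGreatest_spec (P := P) hn hk₀, ?_⟩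
    induction n, hn using Nat.le_induction with
    | base => rw [Nat.findGreatest_eq hk₀]; exact hk₀.le
    | succ n hn ih =>
      by_cases hP : P (n + 1)
      · rw [Nat.findGreatest_eq hP]; exact hP.le
      rw [Nat.findGreatest_of_not hP]
      by_cases hPn : P n
      · rw [Nat.findGreatest_eq hPn]
      · exact (not_lt.1 hPn).trans ih

lemma tendsto_sub_succ_zero_of_eventually_antitone {s : ℕ → ℝ} (hs : ∀ n, 0 ≤ s n)
    (hanti : ∀ᶠ n in atTop, s (n + 1) ≤ s n) : Tendsto (fun n => s n - s (n + 1)) atTop (𝓝 0) := by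
  obtain ⟨N, hN⟩ := eventually_atTop.1 hanti
  have hmono : Antitone fun m => s (m + N) :=
    antitone_nat_of_succ_le fun m => by simpa [Nat.succ_add] using hN (m + N) (by omega)
  have hlim := tendsto_atTop_ciInf hmono ⟨0, by rintro _ ⟨m, rfl⟩; exact hs _⟩
  have hlim' := hlim.sub ((tendsto_add_atTop_iff_nat 1).2 hlim)
  rw [sub_self] at hlim'
  exact (tendsto_add_atTop_iff_nat N).1 (hlim'.congr fun m => by simp [Nat.succ_add])

lemma eventually_lt_of_eventually_antitone {s d β l : ℕ → ℝ} {τ c C : ℝ} (hτ : 0 < τ)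
    (hτ1 : τ ≤ 1) (hc : 0 < c) (hs : ∀ n, 0 ≤ s n) (hd : ∀ n, 0 ≤ d n)
    (hl : ∀ n, l n ∈ Set.Icc (0 : ℝ) 1) (hl0 : Tendsto l atTop (𝓝 0))
    (hdiv : Tendsto (fun n => ∑ k ∈ Finset.range n, l k) atTop atTop)
    (hA : ∀ n, s (n + 1) ≤ (1 - l n * τ) * s n + l n * β n)
    (hB : ∀ n, s (n + 1) ≤ s n - c * d n + l n * C)
    (hβ : Tendsto d atTop (𝓝 0) → ∀ δ > 0, ∀ᶠ n in atTop, β n < δ)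
    (hanti : ∀ᶠ n in atTop, s (n + 1) ≤ s n) {ε : ℝ} (hε : 0 < ε) :
    ∀ᶠ n in atTop, s n < ε := by
  have hdlim : Tendsto d atTop (𝓝 0) := by
    have hlim := ((tendsto_sub_succ_zero_of_eventually_antitone hs hanti).add
      (hl0.mul_const C)).div_const c
    rw [zero_mul, add_zero, zero_div] at hlim
    refine squeeze_zero hd (fun n => ?_) hlim
    rw [le_div_iff₀ hc]
    linarith [hB n]
  have hrec : ∀ᶠ n in atTop, s (n + 1) ≤ (1 - l n * τ) * s n + l n * τ * (ε / 2) := by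
    filter_upwards [hβ hdlim _ (by positivity : 0 < τ * ε / 2)] with n hn
    have := mul_le_mul_of_nonneg_left hn.le (hl n).1
    linarith [hA n]
  have hlτ : Tendsto (fun n => ∑ k ∈ Finset.range n, l k * τ) atTop atTop := by
    simpa [← Finset.sum_mul] using hdiv.atTop_mul_const hτ
  filter_upwards [eventually_lt_of_le_convexComb (fun n => mul_le_one₀ (hl n).2 hτ.le hτ1)
    hlτ hrec (half_pos hε)] with n hn
  linarith

lemma eventually_lt_of_frequently_lt_succ {s d β l : ℕ → ℝ} {τ c C : ℝ} (hτ : 0 < τ)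
    (hτ1 : τ ≤ 1) (hc : 0 < c) (hs : ∀ n, 0 ≤ s n) (hd : ∀ n, 0 ≤ d n)
    (hl : ∀ n, l n ∈ Set.Icc (0 : ℝ) 1) (hl0 : Tendsto l atTop (𝓝 0))
    (hA : ∀ n, s (n + 1) ≤ (1 - l n * τ) * s n + l n * β n)
    (hB : ∀ n, s (n + 1) ≤ s n - c * d n + l n * C)
    (hβ : ∀ φ : ℕ → ℕ, Tendsto φ atTop atTop → Tendsto (d ∘ φ) atTop (𝓝 0) →
      ∀ δ > 0, ∀ᶠ n in atTop, β (φ n) < δ)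
    (hfreq : ∃ᶠ n in atTop, s n < s (n + 1)) {ε : ℝ} (hε : 0 < ε) :
    ∀ᶠ n in atTop, s n < ε := by
  obtain ⟨σ, hσ, hσs⟩ := exists_mainge_subseq hfreq
  have hdσ : Tendsto (d ∘ σ) atTop (𝓝 0) := by
    have hlim := ((hl0.comp hσ).mul_const C).div_const c
    rw [zero_mul, zero_div] at hlim
    refine squeeze_zero' (Eventually.of_forall fun n => hd _) ?_ hlim
    filter_upwards [hσs] with n hn
    rw [Function.comp_apply, Function.comp_apply, le_div_iff₀ hc]
    linarith [hB (σ n), hn.1]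
  have hδ : 0 < τ * ε / 2 := by positivity
  filter_upwards [hσs, hβ σ hσ hdσ _ hδ] with n ⟨hlt, hle⟩ hβn
  have hl' := hl (σ n)
  -- At an increase, the first recursion forces `τ s (σ n) < β (σ n)`.
  have hτs : τ * s (σ n) < β (σ n) :=
    lt_of_mul_lt_mul_left (by linarith [hA (σ n)]) hl'.1
  have hsσ : s (σ n) < ε / 2 := by nlinarith
  have hlβ : l (σ n) * β (σ n) ≤ τ * ε / 2 := calc
    _ ≤ l (σ n) * (τ * ε / 2) := mul_le_mul_of_nonneg_left hβn.le hl'.1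
    _ ≤ τ * ε / 2 := mul_le_of_le_one_left hδ.le hl'.2
  have hlτs : 0 ≤ l (σ n) * τ * s (σ n) := mul_nonneg (mul_nonneg hl'.1 hτ.le) (hs _)
  nlinarith [hA (σ n)]

lemma tendsto_zero_of_mainge {s d β l : ℕ → ℝ} {τ c C : ℝ} (hτ : 0 < τ) (hτ1 : τ ≤ 1)
    (hc : 0 < c) (hs : ∀ n, 0 ≤ s n) (hd : ∀ n, 0 ≤ d n) (hl : ∀ n, l n ∈ Set.Icc (0 : ℝ) 1)
    (hl0 : Tendsto l atTop (𝓝 0))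
    (hdiv : Tendsto (fun n => ∑ k ∈ Finset.range n, l k) atTop atTop)
    (hA : ∀ n, s (n + 1) ≤ (1 - l n * τ) * s n + l n * β n)
    (hB : ∀ n, s (n + 1) ≤ s n - c * d n + l n * C)
    (hβ : ∀ φ : ℕ → ℕ, Tendsto φ atTop atTop → Tendsto (d ∘ φ) atTop (𝓝 0) →
      ∀ δ > 0, ∀ᶠ n in atTop, β (φ n) < δ) :
    Tendsto s atTop (𝓝 0) := by
  refine tendsto_order.2 ⟨fun a ha => Eventually.of_forall fun n => ha.trans_le (hs n),
    fun ε hε => ?_⟩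
  by_cases hanti : ∀ᶠ n in atTop, s (n + 1) ≤ s n
  · exact eventually_lt_of_eventually_antitone hτ hτ1 hc hs hd hl hl0 hdiv hA hB
      (hβ id tendsto_id) hanti hε
  · exact eventually_lt_of_frequently_lt_succ hτ hτ1 hc hs hd hl hl0 hA hB hβ
      ((not_eventually.1 hanti).mono fun _ h => not_le.1 h) hε

lemma tendsto_zero_of_tendsto_sq {f : ℕ → ℝ} (hf : ∀ n, 0 ≤ f n)
    (h : Tendsto (fun n => f n ^ 2) atTop (𝓝 0)) : Tendsto f atTop (𝓝 0) := by
  simpa [Real.sqrt_sq (hf _)] using h.sqrt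

lemma TendstoUniformlyOn.tendsto_norm_sub_comp {E : Type*} [SeminormedAddCommGroup E]
    {F : ℕ → E → E} {f : E → E} {s : Set E} (h : TendstoUniformlyOn F f atTop s) {φ : ℕ → ℕ}
    (hφ : Tendsto φ atTop atTop) {x : ℕ → E} (hx : ∀ n, x n ∈ s) :
    Tendsto (fun n => ‖F (φ n) (x n) - f (x n)‖) atTop (𝓝 0) := by
  refine Metric.tendsto_nhds.2 fun ε hε => ?_
  filter_upwards [hφ.eventually (Metric.tendstoUniformlyOn_iff.1 h ε hε)] with n hn
  simpa [dist_eq_norm, norm_sub_rev] using hn (x n) (hx n)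

lemma LipschitzWith.norm_sub_le_of_one {E F : Type*} [SeminormedAddCommGroup E]
    [SeminormedAddCommGroup F] {f : E → F} (hf : LipschitzWith 1 f) (x y : E) :
    ‖f x - f y‖ ≤ ‖x - y‖ := by
  simpa [dist_eq_norm] using hf.dist_le_mul x y

lemma convex_fixedPoints_of_lipschitzWith_one {E : Type*} [NormedAddCommGroup E]
    [NormedSpace ℝ E] [StrictConvexSpace ℝ E] {T : E → E}
    (hT : LipschitzWith 1 T) : Convex ℝ (Function.fixedPoints T) := by
  refine convex_iff_segment_subset.2 fun x hx y hy => ?_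
  rw [segment_eq_image_lineMap]
  rintro _ ⟨r, ⟨hr0, hr1⟩, rfl⟩
  set p := AffineMap.lineMap x y r
  have hxp : dist x (T p) ≤ r * dist x y := calc
    dist x (T p) = dist (T x) (T p) := by rw [hx.eq]
    _ ≤ dist x p := by simpa using hT.dist_le_mul x p
    _ = r * dist x y := by rw [dist_left_lineMap, Real.norm_of_nonneg hr0]
  have hpy : dist (T p) y ≤ (1 - r) * dist x y := calc
    dist (T p) y = dist (T p) (T y) := by rw [hy.eq]
    _ ≤ dist p y := by simpa using hT.dist_le_mul p y
    _ = (1 - r) * dist x y := by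
      rw [dist_lineMap_right, Real.norm_of_nonneg (sub_nonneg.2 hr1)]
  have htri := dist_triangle x (T p) y
  exact eq_lineMap_of_dist_eq_mul_of_dist_eq_mul (by linarith) (by linarith)

section Hilbert

variable {E : Type*} [NormedAddCommGroup E] [InnerProductSpace ℝ E]

lemma norm_sub_smul_sub_sq_le {A : E → E} {κ η τ l : ℝ}
    (hmono : ∀ x y, κ * ‖x - y‖ ^ 2 ≤ ⟪x - y, A x - A y⟫)
    (hlip : ∀ x y, ‖A x - A y‖ ≤ η * ‖x - y‖) (hτ : τ ≤ 2 * κ - η ^ 2)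
    (hl0 : 0 ≤ l) (hl1 : l ≤ 1) (x y : E) :
    ‖(x - l • A x) - (y - l • A y)‖ ^ 2 ≤ (1 - l * τ) * ‖x - y‖ ^ 2 := by
  have hsplit : (x - l • A x) - (y - l • A y) = (x - y) - l • (A x - A y) := by
    rw [smul_sub]; abel
  have hA2 : ‖A x - A y‖ ^ 2 ≤ η ^ 2 * ‖x - y‖ ^ 2 := by
    rw [← mul_pow]
    exact pow_le_pow_left₀ (norm_nonneg _) (hlip x y) 2
  have hl2 : l ^ 2 ≤ l := by nlinarith
  rw [hsplit, norm_sub_sq_real, real_inner_smul_right, norm_smul, Real.norm_of_nonneg hl0]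
  have h1 := mul_le_mul_of_nonneg_left (hmono x y) hl0
  have h2 := mul_le_mul_of_nonneg_left hA2 hl0
  have h3 := mul_le_mul_of_nonneg_right hl2 (sq_nonneg ‖A x - A y‖)
  have h4 := mul_le_mul_of_nonneg_right hτ (mul_nonneg hl0 (sq_nonneg ‖x - y‖))
  nlinarith

lemma norm_sub_smul_sub_le {A : E → E} {κ η τ l : ℝ}
    (hmono : ∀ x y, κ * ‖x - y‖ ^ 2 ≤ ⟪x - y, A x - A y⟫)
    (hlip : ∀ x y, ‖A x - A y‖ ≤ η * ‖x - y‖) (hτ : τ ≤ 2 * κ - η ^ 2) (hτ1 : τ ≤ 1)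
    (hl0 : 0 ≤ l) (hl1 : l ≤ 1) (x y : E) :
    ‖(x - l • A x) - (y - l • A y)‖ ≤ (1 - l * τ / 2) * ‖x - y‖ := by
  have hsq := norm_sub_smul_sub_sq_le hmono hlip hτ hl0 hl1 x y
  have hlτ : l * τ ≤ 1 := by nlinarith
  refine (pow_le_pow_iff_left₀ (norm_nonneg _) (by nlinarith [norm_nonneg (x - y)])
    two_ne_zero).1 ?_
  nlinarith [sq_nonneg (l * τ * ‖x - y‖)]

lemma norm_sub_smul_sq_le {l : ℝ} (hl0 : 0 ≤ l) (hl1 : l ≤ 1) (a b : E) :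
    ‖a - l • b‖ ^ 2 ≤ ‖a‖ ^ 2 + l * (2 * ‖a‖ * ‖b‖ + ‖b‖ ^ 2) := by
  rw [norm_sub_sq_real, real_inner_smul_right, norm_smul, Real.norm_of_nonneg hl0]
  have h1 := mul_le_mul_of_nonneg_left (neg_le_of_abs_le (abs_real_inner_le_norm a b)) hl0
  have h2 := mul_le_mul_of_nonneg_right (pow_le_pow_left₀ hl0 hl1 2) (sq_nonneg ‖b‖)
  nlinarith [sq_nonneg l]

lemma norm_sub_le_of_inner_le_zero {u v p q : E} (hp : ⟪u - p, q - p⟫ ≤ 0)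
    (hq : ⟪v - q, p - q⟫ ≤ 0) : ‖p - q‖ ≤ ‖u - v‖ := by
  have hsq : ‖p - q‖ ^ 2 ≤ ⟪u - v, p - q⟫ := by
    have h : ⟪u - v, p - q⟫ - ‖p - q‖ ^ 2 = -⟪u - p, q - p⟫ - ⟪v - q, p - q⟫ := by
      rw [← real_inner_self_eq_norm_sq]
      simp only [inner_sub_left, inner_sub_right, real_inner_comm]
      ring
    linarith
  rcases (norm_nonneg (p - q)).eq_or_lt with h0 | h0
  · rw [← h0]; exact norm_nonneg _
  · nlinarith [real_inner_le_norm (u - v) (p - q)]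

lemma exists_mem_forall_inner_sub_nonneg [CompleteSpace E] {K : Set E} (hne : K.Nonempty)
    (hcl : IsClosed K) (hconv : Convex ℝ K) {A : E → E} {κ η : ℝ} (hκη : η ^ 2 < 2 * κ)
    (hmono : ∀ x y, κ * ‖x - y‖ ^ 2 ≤ ⟪x - y, A x - A y⟫)
    (hlip : ∀ x y, ‖A x - A y‖ ≤ η * ‖x - y‖) :
    ∃ z ∈ K, ∀ w ∈ K, 0 ≤ ⟪w - z, A z⟫ := by
  have hproj : ∀ u, ∃ v ∈ K, ∀ w ∈ K, ⟪u - v, w - v⟫ ≤ 0 := fun u => by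
    obtain ⟨v, hv, hmin⟩ := exists_norm_eq_iInf_of_complete_convex hne hcl.isComplete hconv u
    exact ⟨v, hv, (norm_eq_iInf_iff_real_inner_le_zero hconv hv).1 hmin⟩
  choose P hPK hP using hproj
  set τ := min (2 * κ - η ^ 2) 1
  have hτ : 0 < τ := lt_min (by linarith) one_pos
  -- `P ∘ (I - A)` is a contraction, and its fixed point solves the inequality.
  have hcontr : ContractingWith (1 - τ / 2).toNNReal (fun x => P (x - A x)) := by
    refine ⟨Real.toNNReal_lt_one.2 (by linarith), LipschitzWith.of_dist_le_mul fun x y => ?_⟩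
    rw [dist_eq_norm, dist_eq_norm,
      Real.coe_toNNReal _ (by linarith [min_le_right (2 * κ - η ^ 2) 1])]
    calc ‖P (x - A x) - P (y - A y)‖ ≤ ‖(x - A x) - (y - A y)‖ :=
          norm_sub_le_of_inner_le_zero (hP _ _ (hPK _)) (hP _ _ (hPK _))
      _ ≤ (1 - 1 * τ / 2) * ‖x - y‖ := by
          simpa using norm_sub_smul_sub_le hmono hlip (min_le_left _ _) (min_le_right _ _)
            zero_le_one le_rfl x y
      _ = _ := by simp
  have : Nonempty E := ⟨0⟩
  set z := ContractingWith.fixedPoint _ hcontr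
  have hz : P (z - A z) = z := ContractingWith.fixedPoint_isFixedPt hcontr
  refine ⟨z, hz ▸ hPK _, fun w hw => ?_⟩
  have := hP (z - A z) w hw
  rw [hz, sub_sub_cancel_left, inner_neg_left, real_inner_comm] at this
  linarith

lemma eq_of_inner_sub_nonneg {A : E → E} {κ : ℝ} (hκ : 0 < κ)
    (hmono : ∀ x y, κ * ‖x - y‖ ^ 2 ≤ ⟪x - y, A x - A y⟫) {z z' : E}
    (h : 0 ≤ ⟪z' - z, A z⟫) (h' : 0 ≤ ⟪z - z', A z'⟫) : z' = z := by
  have hmono' := hmono z' z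
  rw [← neg_sub z' z, inner_neg_left] at h'
  rw [inner_sub_right] at hmono'
  have : ‖z' - z‖ ^ 2 ≤ 0 := by nlinarith
  exact sub_eq_zero.1 (norm_eq_zero.1 (by nlinarith [norm_nonneg (z' - z)]))

lemma norm_averaged_sub_sq_add_le {γ : ℝ} (hγ : 0 < γ) {x w p : E} (hw : ‖w - p‖ ≤ ‖x - p‖) :
    ‖γ • w + (1 - γ) • x - p‖ ^ 2 + (1 - γ) / γ * ‖γ • w + (1 - γ) • x - x‖ ^ 2
      ≤ ‖x - p‖ ^ 2 := by
  have e1 : γ • w + (1 - γ) • x - p = (x - p) + γ • (w - x) := by module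
  have e2 : γ • w + (1 - γ) • x - x = γ • (w - x) := by module
  have e3 : w - p = (x - p) + (w - x) := by abel
  have hw2 := pow_le_pow_left₀ (norm_nonneg _) hw 2
  rw [e3, norm_add_sq_real] at hw2
  rw [e1, e2, norm_add_sq_real, norm_smul, real_inner_smul_right, Real.norm_of_nonneg hγ.le]
  field_simp
  nlinarith

lemma exists_tendsto_inner_of_norm_le [CompleteSpace E] {ι : Type*} (𝒰 : Ultrafilter ι)
    {x : ι → E} {C : ℝ} (hC : ∀ i, ‖x i‖ ≤ C) :
    ∃ u : E, ∀ v, Tendsto (fun i => ⟪x i, v⟫) 𝒰 (𝓝 ⟪u, v⟫) := by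
  have hbound : ∀ v i, |⟪x i, v⟫| ≤ C * ‖v‖ := fun v i =>
    (abs_real_inner_le_norm _ _).trans (mul_le_mul_of_nonneg_right (hC i) (norm_nonneg v))
  have hlim : ∀ v, ∃ r, Tendsto (fun i => ⟪x i, v⟫) 𝒰 (𝓝 r) := fun v => by
    obtain ⟨r, -, hr⟩ := (isCompact_Icc (a := -(C * ‖v‖)) (b := C * ‖v‖)).ultrafilter_le_nhds
      (𝒰.map fun i => ⟪x i, v⟫) (by
        rw [Ultrafilter.coe_map]
        exact le_principal_iff.2 (mem_map.2 (univ_mem' fun i => abs_le.1 (hbound v i))))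
    exact ⟨r, by rwa [Ultrafilter.coe_map] at hr⟩
  choose Φ hΦ using hlim
  let Φₗ : E →ₗ[ℝ] ℝ :=
    { toFun := Φ
      map_add' := fun v w => tendsto_nhds_unique (hΦ (v + w)) <| by
        simpa only [inner_add_right] using (hΦ v).add (hΦ w)
      map_smul' := fun r v => tendsto_nhds_unique (hΦ (r • v)) <| by
        simpa only [real_inner_smul_right, RingHom.id_apply, smul_eq_mul] using (hΦ v).const_mul r }
  have hΦ_le : ∀ v, ‖Φ v‖ ≤ C * ‖v‖ := fun v =>
    le_of_tendsto (hΦ v).abs (Eventually.of_forall (hbound v))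
  refine ⟨(InnerProductSpace.toDual ℝ E).symm (Φₗ.mkContinuous C hΦ_le), fun v => ?_⟩
  rw [InnerProductSpace.toDual_symm_apply]
  exact hΦ v

lemma isFixedPt_of_tendsto_inner {ι : Type*} {l : Filter ι} [l.NeBot] {x : ι → E}
    {W : E → E} (hW : LipschitzWith 1 W) {C : ℝ} (hC : ∀ i, ‖x i‖ ≤ C)
    (hasym : Tendsto (fun i => ‖x i - W (x i)‖) l (𝓝 0)) {u : E}
    (hweak : ∀ v, Tendsto (fun i => ⟪x i, v⟫) l (𝓝 ⟪u, v⟫)) : W u = u := by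
  set w := u - W u
  -- Expand `‖x i - W u‖²` around `u` and bound `‖x i - W u‖` by `‖x i - W (x i)‖ + ‖x i - u‖`.
  have hkey : ∀ i, 2 * ⟪x i - u, w⟫ + ‖w‖ ^ 2
      ≤ ‖x i - W (x i)‖ ^ 2 + 2 * ‖x i - W (x i)‖ * (C + ‖u‖) := fun i => by
    have e1 : ‖x i - W u‖ ^ 2 = ‖x i - u‖ ^ 2 + 2 * ⟪x i - u, w⟫ + ‖w‖ ^ 2 := by
      rw [show x i - W u = (x i - u) + w by simp only [w]; abel, norm_add_sq_real]
    have e2 : ‖x i - W u‖ ≤ ‖x i - W (x i)‖ + ‖x i - u‖ :=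
      (norm_sub_le_norm_sub_add_norm_sub _ _ _).trans
        (add_le_add_right (hW.norm_sub_le_of_one _ _) _)
    have e3 : ‖x i - u‖ ≤ C + ‖u‖ := (norm_sub_le _ _).trans (by linarith [hC i])
    nlinarith [norm_nonneg (x i - W (x i)), norm_nonneg (x i - u), norm_nonneg (x i - W u)]
  have hinner : Tendsto (fun i => ⟪x i - u, w⟫) l (𝓝 0) := by
    simpa only [inner_sub_left, sub_self] using (hweak w).sub_const ⟪u, w⟫
  have hw : ‖w‖ ^ 2 ≤ 0 := by
    have := le_of_tendsto_of_tendsto' ((hinner.const_mul 2).add_const _)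
      ((hasym.pow 2).add ((hasym.const_mul 2).mul_const _)) hkey
    simpa using this
  exact (sub_eq_zero.1 (norm_eq_zero.1 (by nlinarith [norm_nonneg w]))).symm

lemma eventually_inner_lt_of_tendsto_norm_sub [CompleteSpace E] {ι : Type*} {l : Filter ι}
    {x : ι → E} {W : E → E} (hW : LipschitzWith 1 W) {C : ℝ} (hC : ∀ i, ‖x i‖ ≤ C)
    (hasym : Tendsto (fun i => ‖x i - W (x i)‖) l (𝓝 0)) {g z : E}
    (hfix : ∀ u, W u = u → ⟪g, u - z⟫ ≤ 0) {ε : ℝ} (hε : 0 < ε) :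
    ∀ᶠ i in l, ⟪g, x i - z⟫ < ε := by
  by_contra hcon
  have : (l ⊓ 𝓟 {i | ε ≤ ⟪g, x i - z⟫}).NeBot := by
    rw [← frequently_iff_neBot]
    simpa using hcon
  set 𝒰 := Ultrafilter.of (l ⊓ 𝓟 {i | ε ≤ ⟪g, x i - z⟫})
  have h𝒰 : (𝒰 : Filter ι) ≤ l ⊓ 𝓟 _ := Ultrafilter.of_le _
  obtain ⟨u, hu⟩ := exists_tendsto_inner_of_norm_le 𝒰 hC
  have hWu := isFixedPt_of_tendsto_inner hW hC (hasym.mono_left (h𝒰.trans inf_le_left)) hu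
  have hlim : Tendsto (fun i => ⟪g, x i - z⟫) 𝒰 (𝓝 ⟪g, u - z⟫) := by
    simpa only [inner_sub_right, real_inner_comm g] using (hu g).sub_const ⟪g, z⟫
  have := ge_of_tendsto hlim (le_principal_iff.1 (h𝒰.trans inf_le_right))
  linarith [hfix u hWu]

end Hilbert

section WMap

variable {E : Type*} [NormedAddCommGroup E] [NormedSpace ℝ E] (γ : ℕ → ℝ) (T : ℕ → E → E)

-- `d` counts the averaged steps still to be applied: `U n k = wMap γ T k (n + 1 - k)`.
def wMap : ℕ → ℕ → E → E
  | _, 0 => id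
  | k, d + 1 => fun x => γ k • T k (wMap (k + 1) d x) + (1 - γ k) • x

noncomputable def wMapLim (k : ℕ) (x : E) : E :=
  limUnder atTop fun d => wMap γ T k d x

variable {γ T}

lemma wMap_zero_apply (k : ℕ) (x : E) : wMap γ T k 0 x = x := rfl

lemma wMap_succ_apply (k d : ℕ) (x : E) :
    wMap γ T k (d + 1) x = γ k • T k (wMap γ T (k + 1) d x) + (1 - γ k) • x := rfl

lemma lipschitzWith_wMap (hγ : ∀ k, γ k ∈ Set.Icc (0 : ℝ) 1) (hT : ∀ k, LipschitzWith 1 (T k))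
    (k d : ℕ) : LipschitzWith 1 (wMap γ T k d) := by
  induction d generalizing k with
  | zero => exact LipschitzWith.id
  | succ d ih =>
    refine LipschitzWith.of_dist_le_mul fun x y => ?_
    obtain ⟨hγ0, hγ1⟩ := hγ k
    rw [NNReal.coe_one, one_mul, dist_eq_norm, dist_eq_norm, wMap_succ_apply, wMap_succ_apply]
    calc ‖γ k • T k (wMap γ T (k + 1) d x) + (1 - γ k) • x
          - (γ k • T k (wMap γ T (k + 1) d y) + (1 - γ k) • y)‖
        = ‖γ k • (T k (wMap γ T (k + 1) d x) - T k (wMap γ T (k + 1) d y))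
            + (1 - γ k) • (x - y)‖ := by congr 1; module
      _ ≤ γ k * ‖x - y‖ + (1 - γ k) * ‖x - y‖ := by
        refine (norm_add_le _ _).trans (add_le_add ?_ ?_) <;>
          rw [norm_smul, Real.norm_of_nonneg (by linarith)]
        exact mul_le_mul_of_nonneg_left (((hT k).norm_sub_le_of_one _ _).trans
          ((ih (k + 1)).norm_sub_le_of_one x y)) hγ0
      _ = ‖x - y‖ := by ring

lemma wMap_apply_of_forall_eq {p : E} (hp : ∀ k, T k p = p) (k d : ℕ) : wMap γ T k d p = p := by
  induction d generalizing k with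
  | zero => rfl
  | succ d ih => rw [wMap_succ_apply, ih, hp]; module

lemma norm_wMap_succ_sub_le {b : ℝ} (hγ0 : ∀ k, 0 ≤ γ k) (hγb : ∀ k, γ k ≤ b)
    (hT : ∀ k, LipschitzWith 1 (T k)) (k d : ℕ) (x : E) :
    ‖wMap γ T k (d + 1) x - wMap γ T k d x‖ ≤ b ^ (d + 1) * ‖T (k + d) x - x‖ := by
  induction d generalizing k with
  | zero =>
    rw [wMap_succ_apply, wMap_zero_apply, wMap_zero_apply, add_zero,
      show γ k • T k x + (1 - γ k) • x - x = γ k • (T k x - x) by module, norm_smul,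
      Real.norm_of_nonneg (hγ0 k)]
    simpa using mul_le_mul_of_nonneg_right (hγb k) (norm_nonneg _)
  | succ d ih =>
    rw [wMap_succ_apply k (d + 1), wMap_succ_apply k d,
      show ∀ u v : E, γ k • T k u + (1 - γ k) • x - (γ k • T k v + (1 - γ k) • x)
        = γ k • (T k u - T k v) from fun u v => by module,
      norm_smul, Real.norm_of_nonneg (hγ0 k), pow_succ', mul_assoc,
      show k + (d + 1) = k + 1 + d by ring]
    exact mul_le_mul (hγb k) (((hT k).norm_sub_le_of_one _ _).trans (ih (k + 1)))
      (norm_nonneg _) ((hγ0 k).trans (hγb k))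

lemma dist_wMap_le_geometric {b : ℝ} (hγ0 : ∀ k, 0 ≤ γ k) (hγb : ∀ k, γ k ≤ b)
    (hT : ∀ k, LipschitzWith 1 (T k)) {p : E} (hp : ∀ k, T k p = p) (k d : ℕ) (x : E) :
    dist (wMap γ T k d x) (wMap γ T k (d + 1) x) ≤ 2 * b * ‖x - p‖ * b ^ d := by
  have hTx : ‖T (k + d) x - x‖ ≤ 2 * ‖x - p‖ := calc
    ‖T (k + d) x - x‖ ≤ ‖T (k + d) x - T (k + d) p‖ + ‖p - x‖ := by
      rw [hp]; exact norm_sub_le_norm_sub_add_norm_sub _ _ _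
    _ ≤ 2 * ‖x - p‖ := by
      rw [norm_sub_rev p]; linarith [(hT (k + d)).norm_sub_le_of_one x p]
  have hb : 0 ≤ b := (hγ0 0).trans (hγb 0)
  rw [dist_comm, dist_eq_norm]
  calc _ ≤ b ^ (d + 1) * ‖T (k + d) x - x‖ := norm_wMap_succ_sub_le hγ0 hγb hT k d x
    _ ≤ b ^ (d + 1) * (2 * ‖x - p‖) := by gcongr
    _ = 2 * b * ‖x - p‖ * b ^ d := by ring

lemma tendsto_wMap [CompleteSpace E] {b : ℝ} (hγ0 : ∀ k, 0 ≤ γ k) (hγb : ∀ k, γ k ≤ b)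
    (hb : b < 1) (hT : ∀ k, LipschitzWith 1 (T k)) {p : E} (hp : ∀ k, T k p = p) (k : ℕ)
    (x : E) : Tendsto (fun d => wMap γ T k d x) atTop (𝓝 (wMapLim γ T k x)) :=
  (cauchySeq_of_le_geometric b _ hb (dist_wMap_le_geometric hγ0 hγb hT hp k · x)).tendsto_limUnder

lemma tendstoUniformlyOn_wMap [CompleteSpace E] {b : ℝ} (hγ0 : ∀ k, 0 ≤ γ k)
    (hγb : ∀ k, γ k ≤ b) (hb : b < 1) (hT : ∀ k, LipschitzWith 1 (T k)) {p : E}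
    (hp : ∀ k, T k p = p) (k : ℕ) (q : E) (R : ℝ) :
    TendstoUniformlyOn (wMap γ T k) (wMapLim γ T k) atTop (Metric.closedBall q R) := by
  have hb0 : 0 ≤ b := (hγ0 0).trans (hγb 0)
  have hlim : Tendsto (fun n => 2 * b * (R + ‖q - p‖) * b ^ n / (1 - b)) atTop (𝓝 0) := by
    simpa using ((tendsto_pow_atTop_nhds_zero_of_lt_one hb0 hb).const_mul
      (2 * b * (R + ‖q - p‖))).div_const (1 - b)
  refine Metric.tendstoUniformlyOn_iff.2 fun ε hε => ?_
  filter_upwards [hlim.eventually (gt_mem_nhds hε)] with n hn x hx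
  have hxp : ‖x - p‖ ≤ R + ‖q - p‖ :=
    (norm_sub_le_norm_sub_add_norm_sub x q p).trans (by
      rw [← dist_eq_norm]; linarith [Metric.mem_closedBall.1 hx])
  rw [dist_comm]
  refine (dist_le_of_le_geometric_of_tendsto b _ hb (dist_wMap_le_geometric hγ0 hγb hT hp k · x)
    (tendsto_wMap hγ0 hγb hb hT hp k x) n).trans_lt (lt_of_le_of_lt ?_ hn)
  gcongr

lemma lipschitzWith_wMapLim [CompleteSpace E] {b : ℝ} (hγ0 : ∀ k, 0 ≤ γ k)
    (hγb : ∀ k, γ k ≤ b) (hb : b < 1) (hT : ∀ k, LipschitzWith 1 (T k)) {p : E}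
    (hp : ∀ k, T k p = p) (k : ℕ) : LipschitzWith 1 (wMapLim γ T k) :=
  (isClosed_setOfPred_lipschitzWith 1).mem_of_tendsto
    (tendsto_pi_nhds.2 (tendsto_wMap hγ0 hγb hb hT hp k))
    (Eventually.of_forall (lipschitzWith_wMap
      (fun j => ⟨hγ0 j, (hγb j).trans hb.le⟩) hT k))

lemma wMapLim_apply_of_forall_eq {p : E} (hp : ∀ k, T k p = p) (k : ℕ) :
    wMapLim γ T k p = p :=
  (tendsto_const_nhds.congr fun d => (wMap_apply_of_forall_eq hp k d).symm).limUnder_eq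

lemma wMapLim_apply [CompleteSpace E] {b : ℝ} (hγ0 : ∀ k, 0 ≤ γ k) (hγb : ∀ k, γ k ≤ b)
    (hb : b < 1) (hT : ∀ k, LipschitzWith 1 (T k)) {p : E} (hp : ∀ k, T k p = p) (k : ℕ)
    (x : E) : wMapLim γ T k x = γ k • T k (wMapLim γ T (k + 1) x) + (1 - γ k) • x :=
  tendsto_nhds_unique ((tendsto_add_atTop_iff_nat 1).2 (tendsto_wMap hγ0 hγb hb hT hp k x))
    ((((hT k).continuous.tendsto _).comp (tendsto_wMap hγ0 hγb hb hT hp (k + 1) x)).const_smul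
      (γ k) |>.add_const _)

lemma forall_apply_eq_of_wMapLim_eq [CompleteSpace E] [StrictConvexSpace ℝ E] {b : ℝ}
    (hγ0 : ∀ k, 0 < γ k) (hγb : ∀ k, γ k ≤ b) (hb : b < 1) (hT : ∀ k, LipschitzWith 1 (T k))
    {p : E} (hp : ∀ k, T k p = p) {u : E} (hu : wMapLim γ T 0 u = u) (k : ℕ) : T k u = u := by
  set V := wMapLim γ T
  have hγ0' : ∀ k, 0 ≤ γ k := fun k => (hγ0 k).le
  have hV : ∀ k x, V k x = γ k • T k (V (k + 1) x) + (1 - γ k) • x :=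
    wMapLim_apply hγ0' hγb hb hT hp
  have hVp : ∀ k, V k p = p := wMapLim_apply_of_forall_eq hp
  have hstep : ∀ k, V k u = u → T k (V (k + 1) u) = u := fun k hk => by
    have h : γ k • (T k (V (k + 1) u) - u) = 0 := calc
      _ = (γ k • T k (V (k + 1) u) + (1 - γ k) • u) - u := by module
      _ = 0 := by rw [← hV, hk, sub_self]
    exact sub_eq_zero.1 ((smul_eq_zero.1 h).resolve_left (hγ0 k).ne')
  -- Strict convexity: `V (k+1) u` averages `u` with a point no farther from `p`, yet is not
  -- closer to `p` than `u` is, so the two points coincide.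
  have hall : ∀ k, V k u = u := fun k => by
    induction k with
    | zero => exact hu
    | succ k ih =>
      by_contra hne
      set w := T (k + 1) (V (k + 1 + 1) u)
      have hfar : ‖u - p‖ ≤ ‖V (k + 1) u - p‖ := calc
        ‖u - p‖ = ‖T k (V (k + 1) u) - T k p‖ := by rw [hstep k ih, hp]
        _ ≤ ‖V (k + 1) u - p‖ := (hT k).norm_sub_le_of_one _ _
      have hw : ‖w - p‖ ≤ ‖u - p‖ := calc
        ‖w - p‖ = ‖T (k + 1) (V (k + 1 + 1) u) - T (k + 1) (V (k + 1 + 1) p)‖ := by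
          rw [hVp, hp]
        _ ≤ ‖u - p‖ := ((hT _).norm_sub_le_of_one _ _).trans
          ((lipschitzWith_wMapLim hγ0' hγb hb hT hp _).norm_sub_le_of_one _ _)
      have hwu : w - p ≠ u - p := fun h => hne (by
        rw [hV, show T (k + 1) (V (k + 1 + 1) u) = u from sub_left_injective h]; module)
      have hlt := norm_combo_lt_of_ne hw le_rfl hwu (hγ0 (k + 1))
        (sub_pos.2 ((hγb (k + 1)).trans_lt hb)) (add_sub_cancel _ _)
      rw [show γ (k + 1) • (w - p) + (1 - γ (k + 1)) • (u - p) = V (k + 1) u - p by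
        rw [hV]; module] at hlt
      linarith
  simpa [hall (k + 1)] using hstep k (hall k)

lemma eq_wMap_of_recursion {U : ℕ → ℕ → E → E} (hU1 : ∀ n, U n (n + 1) = id)
    (hU2 : ∀ n k, k ≤ n → ∀ x, U n k x = γ k • T k (U n (k + 1) x) + (1 - γ k) • x) (n : ℕ) :
    U n 0 = wMap γ T 0 (n + 1) := by
  suffices h : ∀ d k, k + d = n + 1 → U n k = wMap γ T k d from h (n + 1) 0 (zero_add _)
  intro d
  induction d with
  | zero => intro k hk; simp only [add_zero] at hk; subst hk; exact hU1 n
  | succ d ih =>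
    intro k hk
    funext x
    rw [hU2 n k (by omega) x, ih (k + 1) (by omega)]
    rfl

end WMap

section HybridSteepestDescent

variable {E : Type*} [NormedAddCommGroup E] [InnerProductSpace ℝ E] {A : E → E} {κ η τ l : ℝ}

lemma norm_wMap_succ_sub_sq_add_le {γ : ℕ → ℝ} {T : ℕ → E → E}
    (hγ : ∀ k, γ k ∈ Set.Icc (0 : ℝ) 1) (hT : ∀ k, LipschitzWith 1 (T k)) {p : E}
    (hp : ∀ k, T k p = p) {k : ℕ} (hγk : 0 < γ k) (d : ℕ) (x : E) :
    ‖wMap γ T k (d + 1) x - p‖ ^ 2 + (1 - γ k) / γ k * ‖wMap γ T k (d + 1) x - x‖ ^ 2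
      ≤ ‖x - p‖ ^ 2 :=
  norm_averaged_sub_sq_add_le hγk <| calc
    ‖T k (wMap γ T (k + 1) d x) - p‖
        = ‖T k (wMap γ T (k + 1) d x) - T k (wMap γ T (k + 1) d p)‖ := by
      rw [wMap_apply_of_forall_eq hp, hp]
    _ ≤ ‖x - p‖ := ((hT k).norm_sub_le_of_one _ _).trans
      ((lipschitzWith_wMap hγ hT (k + 1) d).norm_sub_le_of_one _ _)

lemma norm_step_sub_le (hmono : ∀ x y, κ * ‖x - y‖ ^ 2 ≤ ⟪x - y, A x - A y⟫)
    (hlip : ∀ x y, ‖A x - A y‖ ≤ η * ‖x - y‖) (hτ : τ ≤ 2 * κ - η ^ 2) (hτ1 : τ ≤ 1)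
    (hl0 : 0 ≤ l) (hl1 : l ≤ 1) {x v z : E} (hv : ‖v - z‖ ≤ ‖x - z‖) :
    ‖v - l • A v - z‖ ≤ (1 - l * τ / 2) * ‖x - z‖ + l * ‖A z‖ := by
  have hlτ : 0 ≤ 1 - l * τ / 2 := by nlinarith
  calc ‖v - l • A v - z‖ = ‖((v - l • A v) - (z - l • A z)) - l • A z‖ := by congr 1; abel
    _ ≤ ‖(v - l • A v) - (z - l • A z)‖ + ‖l • A z‖ := norm_sub_le _ _
    _ ≤ (1 - l * τ / 2) * ‖v - z‖ + l * ‖A z‖ := by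
      rw [norm_smul, Real.norm_of_nonneg hl0]
      gcongr
      exact norm_sub_smul_sub_le hmono hlip hτ hτ1 hl0 hl1 v z
    _ ≤ (1 - l * τ / 2) * ‖x - z‖ + l * ‖A z‖ := by gcongr

lemma norm_step_sub_sq_le (hmono : ∀ x y, κ * ‖x - y‖ ^ 2 ≤ ⟪x - y, A x - A y⟫)
    (hlip : ∀ x y, ‖A x - A y‖ ≤ η * ‖x - y‖) (hτ : τ ≤ 2 * κ - η ^ 2) (hτ1 : τ ≤ 1)
    (hl0 : 0 ≤ l) (hl1 : l ≤ 1) {x v z : E} (hv : ‖v - z‖ ≤ ‖x - z‖) :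
    ‖v - l • A v - z‖ ^ 2 ≤ (1 - l * τ) * ‖x - z‖ ^ 2 + l * (2 * ⟪-A z, v - l • A v - z⟫) := by
  set u := (v - l • A v) - (z - l • A z)
  have hsplit : v - l • A v - z = u + l • -A z := by simp only [u, smul_neg]; abel
  have hu : ‖u‖ ^ 2 ≤ (1 - l * τ) * ‖x - z‖ ^ 2 :=
    (norm_sub_smul_sub_sq_le hmono hlip hτ hl0 hl1 v z).trans
      (by gcongr; nlinarith)
  have hexp : ‖v - l • A v - z‖ ^ 2
      = ‖u‖ ^ 2 + 2 * ⟪v - l • A v - z, l • -A z⟫ - ‖l • -A z‖ ^ 2 := by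
    rw [hsplit, norm_add_sq_real, inner_add_left, real_inner_self_eq_norm_sq]
    ring
  rw [hexp, real_inner_smul_right, real_inner_comm]
  nlinarith [sq_nonneg ‖l • -A z‖]

lemma norm_hybrid_sub_le_max (hmono : ∀ x y, κ * ‖x - y‖ ^ 2 ≤ ⟪x - y, A x - A y⟫)
    (hlip : ∀ x y, ‖A x - A y‖ ≤ η * ‖x - y‖) (hτ0 : 0 < τ) (hτ : τ ≤ 2 * κ - η ^ 2)
    (hτ1 : τ ≤ 1) {l : ℕ → ℝ} (hl : ∀ n, l n ∈ Set.Icc (0 : ℝ) 1) {W : ℕ → E → E} {z : E}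
    (hWz : ∀ n x, ‖W n x - z‖ ≤ ‖x - z‖) {y : ℕ → E}
    (hy : ∀ n, y (n + 1) = W n (y n) - l n • A (W n (y n))) (n : ℕ) :
    ‖y n - z‖ ≤ max ‖y 0 - z‖ (2 * ‖A z‖ / τ) := by
  refine le_max_of_le_convexComb (t := fun n => ‖y n - z‖) (a := fun n => l n * τ / 2)
    (M := 2 * ‖A z‖ / τ) (fun n => by have := (hl n).1; positivity)
    (fun n => by nlinarith [mul_le_one₀ (hl n).2 hτ0.le hτ1]) (fun n => ?_) n
  rw [hy]
  refine (norm_step_sub_le hmono hlip hτ hτ1 (hl n).1 (hl n).2 (hWz n (y n))).trans_eq ?_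
  field_simp

lemma eventually_two_inner_lt_of_hybrid [CompleteSpace E] {l : ℕ → ℝ}
    (hl : ∀ n, l n ∈ Set.Icc (0 : ℝ) 1) (hl0 : Tendsto l atTop (𝓝 0)) {W : ℕ → E → E}
    {V : E → E} {z : E} (hV : LipschitzWith 1 V) (hVz : ∀ u, V u = u → 0 ≤ ⟪u - z, A z⟫)
    {y : ℕ → E} (hy : ∀ n, y (n + 1) = W n (y n) - l n • A (W n (y n))) {R C : ℝ}
    (hR : ∀ n, ‖y n - z‖ ≤ R) (hWV : TendstoUniformlyOn W V atTop (Metric.closedBall z R))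
    (hAW : ∀ n, ‖A (W n (y n))‖ ≤ C) {φ : ℕ → ℕ} (hφ : Tendsto φ atTop atTop)
    (hd : Tendsto (fun n => ‖W (φ n) (y (φ n)) - y (φ n)‖) atTop (𝓝 0)) {δ : ℝ} (hδ : 0 < δ) :
    ∀ᶠ n in atTop, 2 * ⟪-A z, y (φ n + 1) - z⟫ < δ := by
  have hasym : Tendsto (fun n => ‖y (φ n) - V (y (φ n))‖) atTop (𝓝 0) := by
    have hWVφ := hWV.tendsto_norm_sub_comp hφ fun n => mem_closedBall_iff_norm.2 (hR (φ n))
    refine squeeze_zero (fun _ => norm_nonneg _) (fun n => ?_) (by simpa using hd.add hWVφ)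
    rw [norm_sub_rev _ (y (φ n))]
    exact norm_sub_le_norm_sub_add_norm_sub _ _ _
  have hstep : Tendsto (fun n => ‖A z‖ * ‖y (φ n + 1) - y (φ n)‖) atTop (𝓝 0) := by
    have hlim := ((hd.add ((hl0.comp hφ).mul_const C)).const_mul ‖A z‖)
    rw [zero_mul, add_zero, mul_zero] at hlim
    refine squeeze_zero (fun _ => by positivity) (fun n => ?_) hlim
    gcongr
    rw [hy, sub_sub, add_comm, ← sub_sub]
    refine (norm_sub_le _ _).trans (add_le_add le_rfl ?_)
    rw [norm_smul, Real.norm_of_nonneg (hl _).1]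
    exact mul_le_mul_of_nonneg_left (hAW _) (hl _).1
  have hfix : ∀ u, V u = u → ⟪-A z, u - z⟫ ≤ 0 := fun u hu => by
    rw [inner_neg_left, real_inner_comm]; linarith [hVz u hu]
  have hbdd : ∀ n, ‖y (φ n)‖ ≤ R + ‖z‖ := fun n => by
    linarith [norm_le_insert' (y (φ n)) z, hR (φ n)]
  filter_upwards [eventually_inner_lt_of_tendsto_norm_sub hV hbdd hasym hfix
    (by positivity : 0 < δ / 4), hstep.eventually (gt_mem_nhds (by positivity : 0 < δ / 4))]
    with n h1 h2
  have hsplit : ⟪-A z, y (φ n + 1) - z⟫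
      = ⟪-A z, y (φ n) - z⟫ + ⟪-A z, y (φ n + 1) - y (φ n)⟫ := by
    rw [← inner_add_right, sub_add_sub_cancel']
  have hle : ⟪-A z, y (φ n + 1) - y (φ n)⟫ ≤ ‖A z‖ * ‖y (φ n + 1) - y (φ n)‖ :=
    (real_inner_le_norm _ _).trans_eq (by rw [norm_neg])
  linarith

theorem tendsto_hybridSteepestDescent [CompleteSpace E]
    (hmono : ∀ x y, κ * ‖x - y‖ ^ 2 ≤ ⟪x - y, A x - A y⟫)
    (hlip : ∀ x y, ‖A x - A y‖ ≤ η * ‖x - y‖) (hτ0 : 0 < τ) (hτ : τ ≤ 2 * κ - η ^ 2)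
    (hτ1 : τ ≤ 1) {l : ℕ → ℝ} (hl : ∀ n, l n ∈ Set.Icc (0 : ℝ) 1)
    (hl0 : Tendsto l atTop (𝓝 0))
    (hdiv : Tendsto (fun n => ∑ k ∈ Finset.range n, l k) atTop atTop)
    {W : ℕ → E → E} {V : E → E} {z : E} {c : ℝ} (hc : 0 < c)
    (hW : ∀ n x, ‖W n x - z‖ ^ 2 + c * ‖W n x - x‖ ^ 2 ≤ ‖x - z‖ ^ 2)
    (hWV : ∀ R, TendstoUniformlyOn W V atTop (Metric.closedBall z R))
    (hV : LipschitzWith 1 V) (hVz : ∀ u, V u = u → 0 ≤ ⟪u - z, A z⟫) {y : ℕ → E}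
    (hy : ∀ n, y (n + 1) = W n (y n) - l n • A (W n (y n))) :
    Tendsto y atTop (𝓝 z) := by
  have hWz : ∀ n x, ‖W n x - z‖ ≤ ‖x - z‖ := fun n x =>
    (pow_le_pow_iff_left₀ (norm_nonneg _) (norm_nonneg _) two_ne_zero).1
      (by nlinarith [hW n x, sq_nonneg ‖W n x - x‖])
  set R := max ‖y 0 - z‖ (2 * ‖A z‖ / τ)
  have hR : ∀ n, ‖y n - z‖ ≤ R := norm_hybrid_sub_le_max hmono hlip hτ0 hτ hτ1 hl hWz hy
  have hWR : ∀ n, ‖W n (y n) - z‖ ≤ R := fun n => (hWz n _).trans (hR n)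
  set C := ‖A z‖ + |η| * R
  have hAW : ∀ n, ‖A (W n (y n))‖ ≤ C := fun n => calc
    ‖A (W n (y n))‖ ≤ ‖A z‖ + ‖A (W n (y n)) - A z‖ := norm_le_insert' _ _
    _ ≤ ‖A z‖ + |η| * R := by
      gcongr
      exact (hlip _ _).trans (mul_le_mul (le_abs_self η) (hWR n) (norm_nonneg _) (abs_nonneg η))
  have hR0 : 0 ≤ R := (norm_nonneg _).trans (hR 0)
  have hC0 : 0 ≤ C := by positivity
  refine tendsto_iff_norm_sub_tendsto_zero.2 (tendsto_zero_of_tendsto_sq (fun n => norm_nonneg _)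
    (tendsto_zero_of_mainge (d := fun n => ‖W n (y n) - y n‖ ^ 2)
      (β := fun n => 2 * ⟪-A z, y (n + 1) - z⟫) (C := 2 * R * C + C ^ 2) hτ0 hτ1 hc
      (fun n => sq_nonneg _) (fun n => sq_nonneg _) hl hl0 hdiv (fun n => ?_) (fun n => ?_) ?_))
  · rw [hy]
    exact norm_step_sub_sq_le hmono hlip hτ hτ1 (hl n).1 (hl n).2 (hWz n (y n))
  · rw [hy, sub_sub, add_comm, ← sub_sub]
    refine (norm_sub_smul_sq_le (hl n).1 (hl n).2 _ _).trans ?_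
    have := mul_le_mul_of_nonneg_left (add_le_add (mul_le_mul (mul_le_mul_of_nonneg_left
      (hWR n) zero_le_two) (hAW n) (norm_nonneg _) (by positivity))
      (pow_le_pow_left₀ (norm_nonneg _) (hAW n) 2)) (hl n).1
    linarith [hW n (y n)]
  · exact fun φ hφ hd δ hδ => eventually_two_inner_lt_of_hybrid hl hl0 hV hVz hy hR (hWV R) hAW
      hφ (tendsto_zero_of_tendsto_sq (fun _ => norm_nonneg _) hd) hδ

end HybridSteepestDescent

theorem iemoto_takahashi_general
    {H : Type*} [NormedAddCommGroup H] [InnerProductSpace ℝ H] [CompleteSpace H]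
    (T : ℕ → H → H) (hT : ∀ n, ∀ x y : H, ‖T n x - T n y‖ ≤ ‖x - y‖)
    (F : Set H) (hF : F = {z : H | ∀ n, T n z = z})
    (hFne : F.Nonempty)
    (A : H → H) (κ η : ℝ) (hκη : η ^ 2 < 2 * κ)
    (hmono : ∀ x y : H, κ * ‖x - y‖ ^ 2 ≤ ⟪x - y, A x - A y⟫)
    (hlip : ∀ x y : H, ‖A x - A y‖ ≤ η * ‖x - y‖)
    (l : ℕ → ℝ) (hl : ∀ n, l n ∈ Set.Icc (0 : ℝ) 1)
    (hl0 : Tendsto l atTop (𝓝 0))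
    (hldiv : Tendsto (fun N => ∑ n ∈ Finset.range N, l n) atTop atTop)
    (a b : ℝ) (ha : 0 < a) (hb : b < 1)
    (γ : ℕ → ℝ) (hγ : ∀ n, γ n ∈ Set.Icc a b)
    (U : ℕ → ℕ → H → H)
    (hU1 : ∀ n, U n (n + 1) = id)
    (hU2 : ∀ n k, k ≤ n → ∀ x : H, U n k x = γ k • T k (U n (k + 1) x) + (1 - γ k) • x)
    (y : ℕ → H)
    (hy : ∀ n, y (n + 1) = U n 0 (y n) - l n • A (U n 0 (y n))) :
    ∃ z : H, (z ∈ F ∧ ∀ w ∈ F, 0 ≤ ⟪w - z, A z⟫) ∧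
      (∀ z' : H, z' ∈ F → (∀ w ∈ F, 0 ≤ ⟪w - z', A z'⟫) → z' = z) ∧
      Tendsto y atTop (𝓝 z) := by
  have hT' : ∀ k, LipschitzWith 1 (T k) := fun k =>
    LipschitzWith.of_dist_le_mul fun x y => by simpa [dist_eq_norm] using hT k x y
  have hγ0 : ∀ k, 0 < γ k := fun k => ha.trans_le (hγ k).1
  have hγb : ∀ k, γ k ≤ b := fun k => (hγ k).2
  have hγI : ∀ k, γ k ∈ Set.Icc (0 : ℝ) 1 := fun k => ⟨(hγ0 k).le, (hγb k).trans hb.le⟩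
  have hFeq : F = ⋂ k, Function.fixedPoints (T k) := by
    rw [hF]; ext; simp [Function.IsFixedPt]
  obtain ⟨p, hp⟩ := hFne
  obtain ⟨z, hzF, hzVI⟩ := exists_mem_forall_inner_sub_nonneg ⟨p, hp⟩
    (hFeq ▸ isClosed_iInter fun k => isClosed_fixedPoints (hT' k).continuous)
    (hFeq ▸ convex_iInter fun k => convex_fixedPoints_of_lipschitzWith_one (hT' k)) hκη hmono hlip
  have hκ : 0 < κ := by nlinarith [sq_nonneg η]
  refine ⟨z, ⟨hzF, hzVI⟩, fun z' hz'F hz'VI =>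
    eq_of_inner_sub_nonneg hκ hmono (hzVI z' hz'F) (hz'VI z hzF), ?_⟩
  rw [hF] at hp hzF
  refine tendsto_hybridSteepestDescent hmono hlip (τ := min (2 * κ - η ^ 2) 1)
    (W := fun n => wMap γ T 0 (n + 1))
    (lt_min (by linarith) one_pos) (min_le_left _ _) (min_le_right _ _) hl hl0 hldiv
    (div_pos (sub_pos.2 ((hγb 0).trans_lt hb)) (hγ0 0))
    (norm_wMap_succ_sub_sq_add_le hγI hT' hzF (hγ0 0))
    (fun R u hu => (tendsto_add_atTop_nat 1).eventually
      (tendstoUniformlyOn_wMap (fun k => (hγ0 k).le) hγb hb hT' hp 0 z R u hu))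
    (lipschitzWith_wMapLim (fun k => (hγ0 k).le) hγb hb hT' hp 0)
    (fun u hu => hzVI u (hF ▸ forall_apply_eq_of_wMapLim_eq hγ0 hγb hb hT' hp hu))
    (fun n => by rw [hy, eq_wMap_of_recursion hU1 hU2])

/-- (Iemoto–Takahashi) Convergence of the hybrid steepest descent method
`y_{n+1} = (I - λ_n A) U_{n,1} y_n` built from the W-mappings
`U_{n,k} = γ_k T_k U_{n,k+1} + (1 - γ_k) I` (here indexed from `0`): the sequence
`{y_n}` converges strongly to the unique solution of the variational inequality
over the common fixed point set `F` of `{T_n}`. -/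
theorem iemoto_takahashi
    {H : Type*} [NormedAddCommGroup H] [InnerProductSpace ℝ H] [CompleteSpace H]
    (T : ℕ → H → H) (hT : ∀ n, ∀ x y : H, ‖T n x - T n y‖ ≤ ‖x - y‖)
    (F : Set H) (hF : F = {z : H | ∀ n, T n z = z})
    (hFne : F.Nonempty)
    (A : H → H) (κ η : ℝ) (hκ : 0 < κ) (hη : 0 < η) (hκη : η ^ 2 < 2 * κ)
    (hmono : ∀ x y : H, κ * ‖x - y‖ ^ 2 ≤ ⟪x - y, A x - A y⟫)
    (hlip : ∀ x y : H, ‖A x - A y‖ ≤ η * ‖x - y‖)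
    (l : ℕ → ℝ) (hl : ∀ n, l n ∈ Set.Icc (0 : ℝ) 1)
    (hl0 : Tendsto l atTop (𝓝 0))
    (hldiv : Tendsto (fun N => ∑ n ∈ Finset.range N, l n) atTop atTop)
    (a b : ℝ) (ha : 0 < a) (hab : a ≤ b) (hb : b < 1)
    (γ : ℕ → ℝ) (hγ : ∀ n, γ n ∈ Set.Icc a b)
    (U : ℕ → ℕ → H → H)
    (hU1 : ∀ n, U n (n + 1) = id)
    (hU2 : ∀ n k, k ≤ n → ∀ x : H, U n k x = γ k • T k (U n (k + 1) x) + (1 - γ k) • x)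
    (y : ℕ → H)
    (hy : ∀ n, y (n + 1) = U n 0 (y n) - l n • A (U n 0 (y n))) :
    ∃ z : H, (z ∈ F ∧ ∀ w ∈ F, 0 ≤ ⟪w - z, A z⟫) ∧
      (∀ z' : H, z' ∈ F → (∀ w ∈ F, 0 ≤ ⟪w - z', A z'⟫) → z' = z) ∧
      Tendsto y atTop (𝓝 z) :=
  iemoto_takahashi_general T hT F hF hFne A κ η hκη hmono hlip l hl hl0 hldiv a b ha hb γ hγ U hU1
    hU2 y hy
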